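/- arXiv:2503.08863 — 4 statements merged into one kernel-verified Lean document; each statement's English description precedes it below -/
import Mathlib

section
/- Let T be a finite set of 3D items with all dimensions in (0,1], and suppose T can be packed into the strip [0,1]×[0,1]×[0,H] for some real H ≥ 1. Then T can be partitioned into at most 2·⌈H⌉ parts, each of which can be packed into the unit cube bin [0,1]^3. -/
/-- The open region occupied by a 3D item of width `w`, depth `d`, height `h`
placed with its bottom-left-back corner at `(x, y, z)`. -/
def ItemRegion (w d h x y z : ℝ) : Set (ℝ × ℝ × ℝ) :=
  Set.Ioo x (x + w) ×ˢ (Set.Ioo y (y + d) ×ˢ Set.Ioo z (z + h))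

/-- `IsPacking T w d h W D H x y z` : the placement `(x, y, z)` is a feasible
axis-aligned non-overlapping packing of the items of `T` (with dimensions
`w`, `d`, `h`) into the box `[0,W] × [0,D] × [0,H]`. -/
def IsPacking {ι : Type*} (T : Finset ι) (w d h : ι → ℝ) (W D H : ℝ)
    (x y z : ι → ℝ) : Prop :=
  (∀ i ∈ T, 0 ≤ x i ∧ x i + w i ≤ W ∧ 0 ≤ y i ∧ y i + d i ≤ D ∧
      0 ≤ z i ∧ z i + h i ≤ H) ∧
  (∀ i ∈ T, ∀ j ∈ T, i ≠ j →
    Disjoint (ItemRegion (w i) (d i) (h i) (x i) (y i) (z i))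
             (ItemRegion (w j) (d j) (h j) (x j) (y j) (z j)))

/-- The items of `T` can be packed into the box `[0,W] × [0,D] × [0,H]`. -/
def CanPack {ι : Type*} (T : Finset ι) (w d h : ι → ℝ) (W D H : ℝ) : Prop :=
  ∃ x y z : ι → ℝ, IsPacking T w d h W D H x y z

/-!
Cut the strip at the integer heights. An item whose bottom lies in `[k, k+1)` either stays below
height `k + 1`, or crosses the plane `z = k + 1`. The items of the first kind fit into one bin after
lowering them by `k`. The items of the second kind all meet that plane, so their footprints in
the `xy`-plane are pairwise disjoint, and since their heights are at most `1` they can all be put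
on the floor of one bin. At most `⌈H⌉` values of `k` occur, which gives `2⌈H⌉` bins.
-/

lemma mem_itemRegion {w d h x y z : ℝ} {p : ℝ × ℝ × ℝ} :
    p ∈ ItemRegion w d h x y z ↔
      (x < p.1 ∧ p.1 < x + w) ∧ (y < p.2.1 ∧ p.2.1 < y + d) ∧ (z < p.2.2 ∧ p.2.2 < z + h) :=
  Iff.rfl

lemma itemRegion_sub_eq_preimage (w d h x y z c : ℝ) :
    ItemRegion w d h x y (z - c) =
      (fun p : ℝ × ℝ × ℝ => (p.1, p.2.1, p.2.2 + c)) ⁻¹' ItemRegion w d h x y z := by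
  ext p
  simp only [Set.mem_preimage, mem_itemRegion]
  constructor <;> rintro ⟨hx, hy, hz₁, hz₂⟩ <;>
    exact ⟨hx, hy, by linarith, by linarith⟩

lemma Disjoint.itemRegion_sub {w d h x y z w' d' h' x' y' z' : ℝ}
    (hd : Disjoint (ItemRegion w d h x y z) (ItemRegion w' d' h' x' y' z')) (c : ℝ) :
    Disjoint (ItemRegion w d h x y (z - c)) (ItemRegion w' d' h' x' y' (z' - c)) := by
  rw [itemRegion_sub_eq_preimage, itemRegion_sub_eq_preimage]
  exact hd.preimage _

/-- Both items meet the plane `z = m`, so their footprints in the `xy`-plane are disjoint. -/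
lemma Disjoint.itemRegion_of_mem_Ioo {w d h x y z w' d' h' x' y' z' m : ℝ}
    (hd : Disjoint (ItemRegion w d h x y z) (ItemRegion w' d' h' x' y' z'))
    (hm : m ∈ Set.Ioo z (z + h)) (hm' : m ∈ Set.Ioo z' (z' + h')) (g c g' c' : ℝ) :
    Disjoint (ItemRegion w d g x y c) (ItemRegion w' d' g' x' y' c') := by
  rw [Set.disjoint_left] at hd ⊢
  rintro p ⟨hx, hy, -⟩ ⟨hx', hy', -⟩
  exact hd (a := (p.1, p.2.1, m)) ⟨hx, hy, hm⟩ ⟨hx', hy', hm'⟩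

/-- The bin of an item with bottom `z` and height `h`: `2k` if it lies in the slab `[k, k+1]`,
where `k = ⌊z⌋₊`, and `2k + 1` if it crosses the plane `z = k + 1`. -/
noncomputable def slabIndex (z h : ℝ) : ℕ :=
  2 * ⌊z⌋₊ + if z + h ≤ ⌊z⌋₊ + 1 then 0 else 1

lemma slabIndex_eq_two_mul {z h : ℝ} {k : ℕ} (hk : slabIndex z h = 2 * k) :
    ⌊z⌋₊ = k ∧ z + h ≤ k + 1 := by
  unfold slabIndex at hk
  split_ifs at hk with hzh
  · obtain rfl : ⌊z⌋₊ = k := by omega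
    exact ⟨rfl, hzh⟩
  · omega

lemma slabIndex_eq_two_mul_add_one {z h : ℝ} {k : ℕ} (hk : slabIndex z h = 2 * k + 1) :
    ⌊z⌋₊ = k ∧ (k : ℝ) + 1 < z + h := by
  unfold slabIndex at hk
  split_ifs at hk with hzh
  · omega
  · obtain rfl : ⌊z⌋₊ = k := by omega
    exact ⟨rfl, not_le.mp hzh⟩

lemma slabIndex_lt {z h H : ℝ} (hz : 0 ≤ z) (hh : 0 < h) (hzH : z + h ≤ H) :
    slabIndex z h < 2 * ⌈H⌉₊ := by
  have hk : ⌊z⌋₊ < ⌈H⌉₊ :=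
    (Nat.floor_lt hz).mpr ((by linarith : z < H).trans_le (Nat.le_ceil H))
  unfold slabIndex
  split_ifs <;> omega

namespace IsPacking

variable {ι : Type*} {T S : Finset ι} {w d h : ι → ℝ} {W D H : ℝ} {x y z : ι → ℝ}

lemma mono (hP : IsPacking T w d h W D H x y z) (hST : S ⊆ T) :
    IsPacking S w d h W D H x y z :=
  ⟨fun i hi => hP.1 i (hST hi), fun i hi j hj => hP.2 i (hST hi) j (hST hj)⟩

lemma canPack_of_mem_Icc (hP : IsPacking T w d h W D H x y z) {c : ℝ}
    (hT : ∀ i ∈ T, c ≤ z i ∧ z i + h i ≤ c + 1) : CanPack T w d h W D 1 := by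
  refine ⟨x, y, fun i => z i - c, fun i hi => ?_, fun i hi j hj hij => ?_⟩
  · obtain ⟨hx₀, hx₁, hy₀, hy₁, -⟩ := hP.1 i hi
    obtain ⟨hc, hc'⟩ := hT i hi
    exact ⟨hx₀, hx₁, hy₀, hy₁, by linarith, by linarith⟩
  · exact (hP.2 i hi j hj hij).itemRegion_sub c

lemma canPack_of_crossing (hP : IsPacking T w d h W D H x y z) {m : ℝ}
    (hT : ∀ i ∈ T, m ∈ Set.Ioo (z i) (z i + h i)) (hh : ∀ i ∈ T, h i ≤ 1) :
    CanPack T w d h W D 1 := by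
  refine ⟨x, y, fun _ => 0, fun i hi => ?_, fun i hi j hj hij => ?_⟩
  · obtain ⟨hx₀, hx₁, hy₀, hy₁, -⟩ := hP.1 i hi
    exact ⟨hx₀, hx₁, hy₀, hy₁, le_rfl, by linarith [hh i hi]⟩
  · exact (hP.2 i hi j hj hij).itemRegion_of_mem_Ioo (hT i hi) (hT j hj) _ _ _ _

lemma canPack_filter_slabIndex_eq (hP : IsPacking T w d h W D H x y z)
    (hh : ∀ i ∈ T, h i ≤ 1) (n : ℕ) :
    CanPack (T.filter fun i => slabIndex (z i) (h i) = n) w d h W D 1 := by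
  have hP' := hP.mono (T.filter_subset fun i => slabIndex (z i) (h i) = n)
  obtain ⟨k, rfl | rfl⟩ := Nat.even_or_odd' n
  · refine hP'.canPack_of_mem_Icc (c := k) fun i hi => ?_
    obtain ⟨hiT, hin⟩ := Finset.mem_filter.mp hi
    obtain ⟨rfl, hzh⟩ := slabIndex_eq_two_mul hin
    exact ⟨Nat.floor_le (hP.1 i hiT).2.2.2.2.1, hzh⟩
  · refine hP'.canPack_of_crossing (m := k + 1)
      (fun i hi => ?_) fun i hi => hh i (Finset.mem_filter.mp hi).1
    obtain ⟨-, hin⟩ := Finset.mem_filter.mp hi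
    obtain ⟨rfl, hzh⟩ := slabIndex_eq_two_mul_add_one hin
    exact ⟨Nat.lt_floor_add_one _, hzh⟩

end IsPacking

lemma Finset.filter_fin_ofNat_eq {ι : Type*} {T : Finset ι} {N : ℕ} [NeZero N] {g : ι → ℕ}
    (hg : ∀ i ∈ T, g i < N) (b : Fin N) :
    T.filter (fun i => Fin.ofNat N (g i) = b) = T.filter (fun i => g i = b) := by
  refine Finset.filter_congr fun i hi => ?_
  rw [Fin.ext_iff, Fin.val_ofNat, Nat.mod_eq_of_lt (hg i hi)]

/-- If a finite set `T` of 3D items with all dimensions in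
`(0,1]` packs into the strip `[0,1] × [0,1] × [0,H]` with `H ≥ 1`, then `T`
can be split into at most `2·⌈H⌉` parts each of which packs into the unit
cube bin. -/
theorem stmt7 {ι : Type*} (T : Finset ι) (w d h : ι → ℝ) (H : ℝ) (hH : 1 ≤ H)
    (hdims : ∀ i ∈ T, 0 < w i ∧ w i ≤ 1 ∧ 0 < d i ∧ d i ≤ 1 ∧
      0 < h i ∧ h i ≤ 1)
    (hpack : CanPack T w d h 1 1 H) :
    ∃ f : ι → Fin (2 * ⌈H⌉₊), ∀ b : Fin (2 * ⌈H⌉₊),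
      CanPack (T.filter fun i => f i = b) w d h 1 1 1 := by
  obtain ⟨x, y, z, hP⟩ := hpack
  have : NeZero (2 * ⌈H⌉₊) := ⟨mul_ne_zero two_ne_zero (Nat.ceil_pos.mpr (by linarith)).ne'⟩
  refine ⟨fun i => Fin.ofNat _ (slabIndex (z i) (h i)), fun b => ?_⟩
  have hlt : ∀ i ∈ T, slabIndex (z i) (h i) < 2 * ⌈H⌉₊ := fun i hi =>
    slabIndex_lt (hP.1 i hi).2.2.2.2.1 (hdims i hi).2.2.2.2.1 (hP.1 i hi).2.2.2.2.2
  rw [Finset.filter_fin_ofNat_eq hlt]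
  exact hP.canPack_filter_slabIndex_eq (fun i hi => (hdims i hi).2.2.2.2.2) b
end

section
/- Let k ≥ 2 be an integer, let I be a finite set of 3D items with all dimensions in (0,1], and let I^k be the instance obtained from I by replacing the height h_i of every item by f_k(h_i) (widths and depths unchanged). Then OPT_SP(I^k) ≤ T_k · OPT_BP^{T_k}(I^k) ≤ T_k · OPT_BP(I). -/
/-- Optimal strip packing height: the infimum of all heights `H ≥ 0` such
that the items of `T` pack into the strip `[0,1] × [0,1] × [0,H]`. -/
noncomputable def OPTSP {ι : Type*} (T : Finset ι) (w d h : ι → ℝ) : ℝ :=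
  sInf {H : ℝ | 0 ≤ H ∧ CanPack T w d h 1 1 H}

/-- Optimal number of `1 × 1 × H` bins: the minimum `m` such that `T` can be
split into `m` parts each of which packs into the box `[0,1] × [0,1] × [0,H]`.
(`OPTBP T w d h 1` is the usual 3D bin packing optimum.) -/
noncomputable def OPTBP {ι : Type*} (T : Finset ι) (w d h : ι → ℝ) (H : ℝ) : ℕ :=
  sInf {m : ℕ | ∃ f : ι → Fin m, ∀ b : Fin m,
    CanPack (T.filter fun i => f i = b) w d h 1 1 H}

/-- The harmonic rounding function of Lee and Lee: `fk k α = 1/q` if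
`α ∈ (1/(q+1), 1/q]` for some `q ∈ {1, …, k−1}` (equivalently `q = ⌊1/α⌋`
when `1/k < α ≤ 1`), and `fk k α = α` for `α ≤ 1/k`. -/
noncomputable def fk (k : ℕ) (α : ℝ) : ℝ :=
  if α ≤ 1 / k then α else 1 / (⌊1 / α⌋₊ : ℝ)

open Finset

section HarmonicRounding

variable {k s : ℕ} {a : ℝ}

lemma fk_of_le (h : a ≤ 1 / k) : fk k a = a := if_pos h

lemma fk_of_lt (h : 1 / k < a) : fk k a = 1 / ⌊1 / a⌋₊ := if_neg h.not_ge

lemma fk_le_one_div_of_le (ha : a ≤ 1 / s) : fk k a ≤ 1 / s := by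
  rcases le_or_gt a (1 / k) with hak | hak
  · rwa [fk_of_le hak]
  have hapos : 0 < a := lt_of_le_of_lt (by positivity) hak
  obtain rfl | hs := Nat.eq_zero_or_pos s
  · rw [Nat.cast_zero, div_zero] at ha
    linarith
  have hsa : (s : ℝ) ≤ ⌊1 / a⌋₊ := by
    exact_mod_cast Nat.le_floor (by rwa [le_one_div (by positivity) hapos])
  rw [fk_of_lt hak]
  exact one_div_le_one_div_of_le (by positivity) hsa

lemma fk_sub_le_div_of_le (ha0 : 0 ≤ a) (ha : a ≤ 1 / (s + 1)) :
    fk k a - a ≤ a / (s + 1) := by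
  rcases le_or_gt a (1 / k) with hak | hak
  · rw [fk_of_le hak, sub_self]; positivity
  have hapos : 0 < a := lt_of_le_of_lt (by positivity) hak
  set q := ⌊1 / a⌋₊
  have hsq : (s : ℝ) + 1 ≤ q := by
    exact_mod_cast Nat.le_floor (by push_cast; rwa [le_one_div (by positivity) hapos])
  have hq : (0 : ℝ) < q := by linarith [(s.cast_nonneg : (0 : ℝ) ≤ s)]
  have haq : 1 < a * (q + 1) := by
    have := Nat.lt_floor_add_one (1 / a)
    rwa [div_lt_iff₀ hapos, mul_comm] at this
  rw [fk_of_lt hak]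
  calc 1 / (q : ℝ) - a ≤ a / q := by
        rw [div_sub' hq.ne', div_le_div_iff_of_pos_right hq]; linarith
    _ ≤ a / (s + 1) := div_le_div_of_nonneg_left ha0 (by positivity) hsq

end HarmonicRounding

section HarmonicBound

variable {ι : Type*} {k : ℕ} {t : ℕ → ℕ} {m : ℕ}

lemma sum_fk_sub_eq_zero (S : Finset ι) (a : ι → ℝ) (ha : ∀ i ∈ S, a i ≤ 1 / k) :
    ∑ i ∈ S, (fk k (a i) - a i) = 0 :=
  sum_eq_zero fun i hi => by rw [fk_of_le (ha i hi), sub_self]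

lemma sum_fk_sub_le_of_le {s : ℕ} (hs : 0 < s) (S : Finset ι) (a : ι → ℝ)
    (ha : ∀ i ∈ S, 0 ≤ a i ∧ a i ≤ 1 / (s + 1)) (hsum : ∑ i ∈ S, a i ≤ 1 / s) :
    ∑ i ∈ S, (fk k (a i) - a i) ≤ 1 / (s * (s + 1)) := by
  calc ∑ i ∈ S, (fk k (a i) - a i) ≤ ∑ i ∈ S, a i / (s + 1) :=
        sum_le_sum fun i hi => fk_sub_le_div_of_le (ha i hi).1 (ha i hi).2
    _ = (∑ i ∈ S, a i) / (s + 1) := (sum_div ..).symm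
    _ ≤ 1 / s / (s + 1) := by gcongr
    _ = 1 / (s * (s + 1)) := by rw [div_div]

lemma one_div_sub_one_div_succ {s : ℝ} (hs : s ≠ 0) (hs' : s + 1 ≠ 0) :
    1 / s - 1 / (s + 1) = 1 / (s * (s + 1)) := by
  field_simp; ring

theorem sum_fk_sub_le_sum_sylvester (hk : 0 < k)
    (htrec : ∀ i, 1 ≤ i → t (i + 1) = t i * (t i + 1)) (hmhi : k < t (m + 1))
    (a : ι → ℝ) (S : Finset ι) (j : ℕ) (hj1 : 1 ≤ j) (hjm : j ≤ m + 1) (htj : 0 < t j)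
    (ha : ∀ i ∈ S, 0 ≤ a i) (hsum : ∑ i ∈ S, a i ≤ 1 / t j) :
    ∑ i ∈ S, (fk k (a i) - a i) ≤ ∑ l ∈ Icc j m, (1 : ℝ) / t (l + 1) := by
  classical
  induction S using Finset.strongInduction generalizing j with
  | H S ih =>
  have hle_sum : ∀ i ∈ S, a i ≤ 1 / t j := fun i hi => (single_le_sum ha hi).trans hsum
  have htail_nonneg : 0 ≤ ∑ l ∈ Icc (j + 1) m, (1 : ℝ) / t (l + 1) := by positivity
  rcases le_or_gt k (t j) with hkt | htk
  · rw [sum_fk_sub_eq_zero S a fun i hi => (hle_sum i hi).trans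
      (one_div_le_one_div_of_le (by positivity) (by exact_mod_cast hkt))]
    positivity
  have hjm : j ≤ m := by
    by_contra hjm'
    obtain rfl : j = m + 1 := by omega
    omega
  have htj' : (0 : ℝ) < t j := by exact_mod_cast htj
  have hsucc : (t (j + 1) : ℝ) = t j * (t j + 1) := by rw [htrec j hj1]; push_cast; rfl
  have hstep := one_div_sub_one_div_succ htj'.ne' (by positivity : (t j : ℝ) + 1 ≠ 0)
  rw [← add_sum_Ioc_eq_sum_Icc hjm, ← Icc_add_one_left_eq_Ioc, hsucc]
  by_cases hbig : ∃ i ∈ S, 1 / ((t j : ℝ) + 1) < a i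
  · obtain ⟨i, hi, hai⟩ := hbig
    rw [← add_sum_erase S a hi] at hsum
    have hrest := ih (S.erase i) (erase_ssubset hi) (j + 1) (by omega) (by omega)
      (by rw [htrec j hj1]; positivity) (fun l hl => ha l (mem_of_mem_erase hl))
      (by rw [hsucc]; linarith)
    rw [← add_sum_erase S _ hi]
    linarith [fk_le_one_div_of_le (k := k) (hle_sum i hi)]
  · push Not at hbig
    have := sum_fk_sub_le_of_le (k := k) htj S a (fun i hi => ⟨ha i hi, hbig i hi⟩) hsum
    linarith

end HarmonicBound

lemma add_sum_Icc_succ_eq_sum_Icc_add (f : ℕ → ℝ) (m : ℕ) :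
    f 1 + ∑ l ∈ Icc 1 m, f (l + 1) = ∑ l ∈ Icc 1 m, f l + f (m + 1) := by
  induction m with
  | zero => simp
  | succ m ih => rw [sum_Icc_succ_top (by omega), sum_Icc_succ_top (by omega)]; linarith

theorem sum_fk_le_harmonicConstant {ι : Type*} {k : ℕ} (hk : 2 ≤ k) {t : ℕ → ℕ}
    (ht1 : t 1 = 1) (htrec : ∀ i, 1 ≤ i → t (i + 1) = t i * (t i + 1))
    {m : ℕ} (hmhi : k < t (m + 1)) {Tk : ℝ}
    (hTk : Tk = (∑ q ∈ Icc 1 m, (1 : ℝ) / (t q)) +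
      (k : ℝ) / ((t (m + 1) : ℝ) * ((k : ℝ) - 1)))
    (S : Finset ι) (a : ι → ℝ) (ha : ∀ i ∈ S, 0 ≤ a i) (hsum : ∑ i ∈ S, a i ≤ 1) :
    ∑ i ∈ S, fk k (a i) ≤ Tk := by
  have hgain := sum_fk_sub_le_sum_sylvester (by omega) htrec hmhi a S 1 le_rfl (by omega)
    (by omega) ha (by rwa [ht1, Nat.cast_one, div_one])
  have htel := add_sum_Icc_succ_eq_sum_Icc_add (fun l => (1 : ℝ) / t l) m
  have htm : (0 : ℝ) < t (m + 1) := by exact_mod_cast (show 0 < t (m + 1) by omega)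
  have hk1 : (1 : ℝ) ≤ k - 1 := by
    have : (2 : ℝ) ≤ k := by exact_mod_cast hk
    linarith
  have htail : 1 / (t (m + 1) : ℝ) ≤ k / (t (m + 1) * (k - 1)) := by
    rw [div_le_div_iff₀ htm (by positivity)]
    nlinarith
  simp only [ht1, Nat.cast_one, div_one] at htel
  calc ∑ i ∈ S, fk k (a i) = ∑ i ∈ S, a i + ∑ i ∈ S, (fk k (a i) - a i) := by
        rw [← sum_add_distrib]; simp
    _ ≤ Tk := by linarith

section Packing

variable {ι : Type*}

lemma itemRegion_disjoint_iff {w d h x y z w' d' h' x' y' z' : ℝ} :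
    Disjoint (ItemRegion w d h x y z) (ItemRegion w' d' h' x' y' z') ↔
      Disjoint (Set.Ioo x (x + w)) (Set.Ioo x' (x' + w')) ∨
      Disjoint (Set.Ioo y (y + d)) (Set.Ioo y' (y' + d')) ∨
      Disjoint (Set.Ioo z (z + h)) (Set.Ioo z' (z' + h')) := by
  simp only [ItemRegion, Set.disjoint_prod]

lemma Ioo_disjoint_Ioo_of_add_le {a b u v : ℝ} (h : a + u ≤ b) :
    Disjoint (Set.Ioo a (a + u)) (Set.Ioo b (b + v)) :=
  Set.Ioo_disjoint_Ioo.2 ((min_le_left _ _).trans (h.trans (le_max_right _ _)))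

lemma add_le_or_add_le_of_Ioo_disjoint {a b u v : ℝ} (hu : 0 < u) (hv : 0 < v)
    (h : Disjoint (Set.Ioo a (a + u)) (Set.Ioo b (b + v))) : a + u ≤ b ∨ b + v ≤ a := by
  rw [Set.Ioo_disjoint_Ioo, min_le_iff, le_max_iff, le_max_iff] at h
  rcases h with (h | h) | (h | h) <;> first | (left; linarith) | (right; linarith)

lemma itemRegion_add_z_disjoint_iff {w d h x y z w' d' h' x' y' z' c : ℝ} :
    Disjoint (ItemRegion w d h x y (z + c)) (ItemRegion w' d' h' x' y' (z' + c)) ↔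
      Disjoint (ItemRegion w d h x y z) (ItemRegion w' d' h' x' y' z') := by
  simp only [itemRegion_disjoint_iff, Set.Ioo_disjoint_Ioo, add_right_comm _ c,
    min_add_add_right, max_add_add_right, add_le_add_iff_right]

def lowerStacks (T : Finset ι) (h z : ι → ℝ) (i : ι) : Set (Finset ι) :=
  {S | S ⊆ T ∧ (∀ l ∈ S, z l + h l ≤ z i) ∧ ∑ l ∈ S, h l ≤ z i}

section LowerStacks

variable {T S : Finset ι} {h z : ι → ℝ} {i j : ι}

lemma lowerStacks_finite : (lowerStacks T h z i).Finite :=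
  T.powerset.finite_toSet.subset fun _ hS => mem_coe.2 (mem_powerset.2 hS.1)

lemma empty_mem_lowerStacks (hz : 0 ≤ z i) : ∅ ∈ lowerStacks T h z i := by
  simp [lowerStacks, hz]

lemma notMem_of_mem_lowerStacks (hS : S ∈ lowerStacks T h z i) (hi : 0 < h i) : i ∉ S :=
  fun hiS => by linarith [hS.2.1 i hiS]

lemma insert_mem_lowerStacks [DecidableEq ι] (hS : S ∈ lowerStacks T h z j) (hj : j ∈ T)
    (hhj : 0 < h j) (hji : z j + h j ≤ z i) : insert j S ∈ lowerStacks T h z i := by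
  obtain ⟨hST, hbelow, hsum⟩ := hS
  refine ⟨insert_subset hj hST, ?_, ?_⟩
  · simp only [mem_insert, forall_eq_or_imp]
    exact ⟨hji, fun l hl => by linarith [hbelow l hl]⟩
  · rw [sum_insert (notMem_of_mem_lowerStacks ⟨hST, hbelow, hsum⟩ hhj)]
    linarith

end LowerStacks

variable {T : Finset ι} {w d h h' : ι → ℝ} {W D H H' : ℝ}

theorem CanPack.of_forall_sum_le (hcp : CanPack T w d h W D H) (hh : ∀ i ∈ T, 0 < h i)
    (hbound : ∀ S ⊆ T, ∑ i ∈ S, h i ≤ H → ∑ i ∈ S, h' i ≤ H') :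
    CanPack T w d h' W D H' := by
  classical
  obtain ⟨x, y, z, hbox, hdisj⟩ := hcp
  set z' : ι → ℝ := fun i => sSup ((fun S => ∑ l ∈ S, h' l) '' lowerStacks T h z i)
  have hle : ∀ i, ∀ S ∈ lowerStacks T h z i, ∑ l ∈ S, h' l ≤ z' i := fun i S hS =>
    le_csSup (lowerStacks_finite.image _).bddAbove (Set.mem_image_of_mem _ hS)
  have hmax : ∀ i ∈ T, ∃ S ∈ lowerStacks T h z i, ∑ l ∈ S, h' l = z' i := fun i hi =>
    ((Set.image_nonempty.2 ⟨_, empty_mem_lowerStacks (hbox i hi).2.2.2.2.1⟩).csSup_mem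
      (lowerStacks_finite.image _))
  have hmono : ∀ i, ∀ j ∈ T, z j + h j ≤ z i → z' j + h' j ≤ z' i := by
    intro i j hj hji
    obtain ⟨S, hS, hSz⟩ := hmax j hj
    have := hle i _ (insert_mem_lowerStacks hS hj (hh j hj) hji)
    rwa [sum_insert (notMem_of_mem_lowerStacks hS (hh j hj)), hSz, add_comm] at this
  have htop : ∀ i ∈ T, z' i + h' i ≤ H' := by
    intro i hi
    obtain ⟨S, ⟨hST, hbelow, hsum⟩, hSz⟩ := hmax i hi
    have hiS := notMem_of_mem_lowerStacks ⟨hST, hbelow, hsum⟩ (hh i hi)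
    have := hbound (insert i S) (insert_subset hi hST) (by
      rw [sum_insert hiS]; linarith [(hbox i hi).2.2.2.2.2])
    rwa [sum_insert hiS, hSz, add_comm] at this
  refine ⟨x, y, z', fun i hi => ?_, fun i hi j hj hij => ?_⟩
  · obtain ⟨hx0, hxW, hy0, hyD, hz0, -⟩ := hbox i hi
    simpa using ⟨hx0, hxW, hy0, hyD, hle i ∅ (empty_mem_lowerStacks hz0), htop i hi⟩
  · have := hdisj i hi j hj hij
    rw [itemRegion_disjoint_iff] at this ⊢
    refine this.imp_right (Or.imp_right fun hz => ?_)
    rcases add_le_or_add_le_of_Ioo_disjoint (hh i hi) (hh j hj) hz with hij | hji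
    · exact Ioo_disjoint_Ioo_of_add_le (hmono j i hi hij)
    · exact (Ioo_disjoint_Ioo_of_add_le (hmono i j hj hji)).symm

theorem CanPack.of_partition {N : ℕ} (f : ι → Fin N) (hH : 0 ≤ H)
    (hf : ∀ b, CanPack (T.filter fun i => f i = b) w d h W D H) :
    CanPack T w d h W D (N * H) := by
  choose X Y Z hP using hf
  have hmem : ∀ i ∈ T, i ∈ T.filter fun l => f l = f i := fun i hi => mem_filter.2 ⟨hi, rfl⟩
  have hlevel : ∀ i ∈ T, 0 ≤ Z (f i) i ∧ Z (f i) i + h i ≤ H := fun i hi =>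
    ⟨((hP (f i)).1 i (hmem i hi)).2.2.2.2.1, ((hP (f i)).1 i (hmem i hi)).2.2.2.2.2⟩
  have hbin : ∀ b : Fin N, ((b : ℕ) + 1 : ℝ) * H ≤ N * H := fun b =>
    mul_le_mul_of_nonneg_right (by exact_mod_cast b.is_lt) hH
  have hsep : ∀ i ∈ T, ∀ j ∈ T, f i < f j →
      Z (f i) i + (f i : ℕ) * H + h i ≤ Z (f j) j + (f j : ℕ) * H := by
    intro i hi j hj hlt
    have : ((f i : ℕ) + 1 : ℝ) * H ≤ (f j : ℕ) * H :=
      mul_le_mul_of_nonneg_right (by exact_mod_cast hlt) hH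
    linarith [hlevel i hi, hlevel j hj]
  refine ⟨fun i => X (f i) i, fun i => Y (f i) i, fun i => Z (f i) i + (f i : ℕ) * H,
    fun i hi => ?_, fun i hi j hj hij => ?_⟩
  · obtain ⟨hx0, hxW, hy0, hyD, hz0, hzH⟩ := (hP (f i)).1 i (hmem i hi)
    refine ⟨hx0, hxW, hy0, hyD, by positivity, ?_⟩
    linarith [hbin (f i)]
  · rcases lt_trichotomy (f i) (f j) with hlt | heq | hgt
    · exact itemRegion_disjoint_iff.2
        (.inr (.inr (Ioo_disjoint_Ioo_of_add_le (hsep i hi j hj hlt))))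
    · simp only [heq]
      refine itemRegion_add_z_disjoint_iff.2 ((hP (f j)).2 i ?_ j (hmem j hj) hij)
      exact mem_filter.2 ⟨hi, heq⟩
    · exact (itemRegion_disjoint_iff.2
        (.inr (.inr (Ioo_disjoint_Ioo_of_add_le (hsep j hj i hi hgt))))).symm

theorem CanPack.of_subsingleton (hT : (T : Set ι).Subsingleton)
    (hdims : ∀ i ∈ T, w i ≤ W ∧ d i ≤ D ∧ h i ≤ H) : CanPack T w d h W D H :=
  ⟨0, 0, 0, fun i hi => by simpa using hdims i hi, fun i hi j hj hij => absurd (hT hi hj) hij⟩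

end Packing

section BinPacking

variable {ι : Type*} {T : Finset ι} {w d h : ι → ℝ} {H : ℝ}

lemma exists_partition_canPack (hdims : ∀ i ∈ T, w i ≤ 1 ∧ d i ≤ 1 ∧ h i ≤ H) :
    ∃ N, ∃ f : ι → Fin N, ∀ b, CanPack (T.filter fun i => f i = b) w d h 1 1 H := by
  classical
  refine ⟨T.card + 1, fun i => if hi : i ∈ T then (T.equivFin ⟨i, hi⟩).castSucc
    else Fin.last _, fun b => CanPack.of_subsingleton ?_ fun i hi => hdims i (mem_filter.1 hi).1⟩
  intro i hi j hj
  simp only [mem_coe, mem_filter] at hi hj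
  have := hi.2.trans hj.2.symm
  rw [dif_pos hi.1, dif_pos hj.1, Fin.castSucc_inj, T.equivFin.apply_eq_iff_eq] at this
  exact congrArg Subtype.val this

lemma OPTBP_le {N : ℕ} (f : ι → Fin N)
    (hf : ∀ b, CanPack (T.filter fun i => f i = b) w d h 1 1 H) : OPTBP T w d h H ≤ N :=
  Nat.sInf_le ⟨f, hf⟩

lemma exists_partition_OPTBP
    (hne : ∃ N, ∃ f : ι → Fin N, ∀ b, CanPack (T.filter fun i => f i = b) w d h 1 1 H) :
    ∃ f : ι → Fin (OPTBP T w d h H), ∀ b, CanPack (T.filter fun i => f i = b) w d h 1 1 H :=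
  Nat.sInf_mem hne

lemma OPTSP_le (hH : 0 ≤ H) (hcp : CanPack T w d h 1 1 H) : OPTSP T w d h ≤ H :=
  csInf_le ⟨0, fun _ hH' => hH'.1⟩ ⟨hH, hcp⟩

end BinPacking

theorem stmt10_general {ι : Type*} (I : Finset ι) (w d h : ι → ℝ)
    (hdims : ∀ i ∈ I, 0 < w i ∧ w i ≤ 1 ∧ 0 < d i ∧ d i ≤ 1 ∧
      0 < h i ∧ h i ≤ 1)
    (k : ℕ) (hk : 2 ≤ k)
    (t : ℕ → ℕ) (ht1 : t 1 = 1)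
    (htrec : ∀ i, 1 ≤ i → t (i + 1) = t i * (t i + 1))
    (m : ℕ) (hmhi : k < t (m + 1))
    (Tk : ℝ)
    (hTk : Tk = (∑ q ∈ Finset.Icc 1 m, (1 : ℝ) / (t q)) +
      (k : ℝ) / ((t (m + 1) : ℝ) * ((k : ℝ) - 1))) :
    OPTSP I w d (fun i => fk k (h i)) ≤
        Tk * (OPTBP I w d (fun i => fk k (h i)) Tk : ℝ) ∧
      Tk * (OPTBP I w d (fun i => fk k (h i)) Tk : ℝ) ≤
        Tk * (OPTBP I w d h 1 : ℝ) := by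
  have hround : ∀ S ⊆ I, CanPack S w d h 1 1 1 → CanPack S w d (fun i => fk k (h i)) 1 1 Tk :=
    fun S hSI hcp => hcp.of_forall_sum_le (fun i hi => (hdims i (hSI hi)).2.2.2.2.1)
      fun U hUS => sum_fk_le_harmonicConstant hk ht1 htrec hmhi hTk U h
        fun i hi => (hdims i (hSI (hUS hi))).2.2.2.2.1.le
  have hTk0 : 0 ≤ Tk := by
    simpa using sum_fk_le_harmonicConstant hk ht1 htrec hmhi hTk (∅ : Finset ι) h (by simp)
      (by simp)
  obtain ⟨f, hf⟩ := exists_partition_OPTBP (exists_partition_canPack fun i hi =>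
    ⟨(hdims i hi).2.1, (hdims i hi).2.2.2.1, (hdims i hi).2.2.2.2.2⟩)
  have hfk : ∀ b, CanPack (I.filter fun i => f i = b) w d (fun i => fk k (h i)) 1 1 Tk :=
    fun b => hround _ (filter_subset _ _) (hf b)
  obtain ⟨g, hg⟩ := exists_partition_OPTBP ⟨_, f, hfk⟩
  refine ⟨?_, mul_le_mul_of_nonneg_left (by exact_mod_cast OPTBP_le f hfk) hTk0⟩
  rw [mul_comm]
  exact OPTSP_le (by positivity) (CanPack.of_partition g hTk0 hg)

/-- Let `I^k` be obtained from `I` by harmonically rounding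
the heights with `fk k`. Then
`OPT_SP(I^k) ≤ T_k · OPT_BP^{T_k}(I^k) ≤ T_k · OPT_BP(I)`, where `T_k` is the
harmonic constant built from the Sylvester-type sequence `t`. -/
theorem stmt10 {ι : Type*} (I : Finset ι) (w d h : ι → ℝ)
    (hdims : ∀ i ∈ I, 0 < w i ∧ w i ≤ 1 ∧ 0 < d i ∧ d i ≤ 1 ∧
      0 < h i ∧ h i ≤ 1)
    (k : ℕ) (hk : 2 ≤ k)
    (t : ℕ → ℕ) (ht1 : t 1 = 1)
    (htrec : ∀ i, 1 ≤ i → t (i + 1) = t i * (t i + 1))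
    (m : ℕ) (hm1 : 1 ≤ m) (hmlo : t m ≤ k) (hmhi : k < t (m + 1))
    (Tk : ℝ)
    (hTk : Tk = (∑ q ∈ Finset.Icc 1 m, (1 : ℝ) / (t q)) +
      (k : ℝ) / ((t (m + 1) : ℝ) * ((k : ℝ) - 1))) :
    OPTSP I w d (fun i => fk k (h i)) ≤
        Tk * (OPTBP I w d (fun i => fk k (h i)) Tk : ℝ) ∧
      Tk * (OPTBP I w d (fun i => fk k (h i)) Tk : ℝ) ≤
        Tk * (OPTBP I w d h 1 : ℝ) :=
  stmt10_general I w d h hdims k hk t ht1 htrec m hmhi Tk hTk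
end

section
/- Let J be a finite set of n ≥ 1 3D items with all dimensions in (0,1] and total volume V = v(J) > 0, let ε > 0, and set u = εV/n. For each item i let k_i = ⌈h_i/u⌉, and let R(J) be the multiset of rectangles consisting, for each item i ∈ J, of k_i copies of the rectangle with width w_i and height d_i. Let OPT_2DBP(R(J)) be the minimum number of unit square bins [0,1]×[0,1] into which the rectangles of R(J) can be packed (axis-aligned, without rotations, with pairwise disjoint interiors). Then u · OPT_2DBP(R(J)) ≤ (1+ε) · OPT_SP(J). -/
/-- The open region occupied by a 2D rectangle of width `w` and height `h`
placed with its bottom-left corner at `(x, y)`. -/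
def RectRegion (w h x y : ℝ) : Set (ℝ × ℝ) :=
  Set.Ioo x (x + w) ×ˢ Set.Ioo y (y + h)

/-- `IsPacking2 T w h W H x y` : the placement `(x, y)` is a feasible
axis-aligned non-overlapping (no rotations) packing of the rectangles of `T`
(with dimensions `w`, `h`) into the box `[0,W] × [0,H]`. -/
def IsPacking2 {ι : Type*} (T : Finset ι) (w h : ι → ℝ) (W H : ℝ)
    (x y : ι → ℝ) : Prop :=
  (∀ i ∈ T, 0 ≤ x i ∧ x i + w i ≤ W ∧ 0 ≤ y i ∧ y i + h i ≤ H) ∧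
  (∀ i ∈ T, ∀ j ∈ T, i ≠ j →
    Disjoint (RectRegion (w i) (h i) (x i) (y i))
             (RectRegion (w j) (h j) (x j) (y j)))

/-- The rectangles of `T` can be packed into the box `[0,W] × [0,H]`. -/
def CanPack2 {ι : Type*} (T : Finset ι) (w h : ι → ℝ) (W H : ℝ) : Prop :=
  ∃ x y : ι → ℝ, IsPacking2 T w h W H x y

/-- Optimal 2D bin packing: the minimum number `m` of unit square bins such
that the rectangles of `T` can be split into `m` parts each of which packs
into `[0,1] × [0,1]`. -/
noncomputable def OPT2DBP {ι : Type*} (T : Finset ι) (w h : ι → ℝ) : ℕ :=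
  sInf {m : ℕ | ∃ f : ι → Fin m, ∀ b : Fin m,
    CanPack2 (T.filter fun i => f i = b) w h 1 1}

/-! Fix a packing of `J` of height `H` and cut it by the horizontal planes at heights
`u, 2u, …`. Every copy `j` of item `i` except the last is assigned the plane at height
`(⌊zᵢ/u⌋ + j + 1) u`, which crosses item `i` because `(j + 1) u < hᵢ`; the bases of items
crossed by a common plane are pairwise disjoint, so the copies assigned to one plane fill one
unit bin. At most `⌊H/u⌋` planes are used and each last copy gets a bin of its own, so
`u · OPT_2DBP(R(J)) ≤ H + u n = H + εV`. Finally `V ≤ H` by comparing volumes. -/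

open MeasureTheory

section

variable {ι : Type*}

lemma volume_itemRegion {w d h : ℝ} (x y z : ℝ) (hw : 0 ≤ w) (hd : 0 ≤ d) :
    volume (ItemRegion w d h x y z) = ENNReal.ofReal (w * d * h) := by
  rw [ItemRegion, Measure.volume_eq_prod, Measure.prod_prod, Measure.volume_eq_prod,
    Measure.prod_prod, Real.volume_Ioo, Real.volume_Ioo, Real.volume_Ioo]
  simp only [add_sub_cancel_left]
  rw [ENNReal.ofReal_mul (mul_nonneg hw hd), ENNReal.ofReal_mul hw, mul_assoc]

lemma IsPacking.sum_volume_le {T : Finset ι} {w d h x y z : ι → ℝ} {W D H : ℝ}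
    (hp : IsPacking T w d h W D H x y z)
    (hdims : ∀ i ∈ T, 0 ≤ w i ∧ 0 ≤ d i ∧ 0 ≤ h i)
    (hW : 0 ≤ W) (hD : 0 ≤ D) (hH : 0 ≤ H) :
    ∑ i ∈ T, w i * d i * h i ≤ W * D * H := by
  set region := fun i => ItemRegion (w i) (d i) (h i) (x i) (y i) (z i)
  have hsub : (⋃ i ∈ T, region i) ⊆ Set.Icc 0 W ×ˢ (Set.Icc 0 D ×ˢ Set.Icc 0 H) := by
    refine Set.iUnion₂_subset fun i hi => ?_
    obtain ⟨hx0, hx1, hy0, hy1, hz0, hz1⟩ := hp.1 i hi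
    rintro ⟨a, b, c⟩ ⟨⟨ha0, ha1⟩, ⟨hb0, hb1⟩, ⟨hc0, hc1⟩⟩
    exact ⟨⟨by linarith, by linarith⟩, ⟨by linarith, by linarith⟩,
      ⟨by linarith, by linarith⟩⟩
  have key : ENNReal.ofReal (∑ i ∈ T, w i * d i * h i) ≤ ENNReal.ofReal (W * D * H) :=
    calc ENNReal.ofReal (∑ i ∈ T, w i * d i * h i)
        = ∑ i ∈ T, volume (region i) := by
          rw [ENNReal.ofReal_sum_of_nonneg fun i hi => by
            obtain ⟨_, _, _⟩ := hdims i hi; positivity]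
          exact Finset.sum_congr rfl fun i hi =>
            (volume_itemRegion _ _ _ (hdims i hi).1 (hdims i hi).2.1).symm
      _ = volume (⋃ i ∈ T, region i) :=
          (measure_biUnion_finset hp.2
            fun i _ => (isOpen_Ioo.prod (isOpen_Ioo.prod isOpen_Ioo)).measurableSet).symm
      _ ≤ volume (Set.Icc 0 W ×ˢ (Set.Icc 0 D ×ˢ Set.Icc 0 H)) := measure_mono hsub
      _ = ENNReal.ofReal (W * D * H) := by
          rw [Measure.volume_eq_prod, Measure.prod_prod, Measure.volume_eq_prod,
            Measure.prod_prod, Real.volume_Icc, Real.volume_Icc, Real.volume_Icc, sub_zero,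
            sub_zero, sub_zero, ← ENNReal.ofReal_mul hD, ← ENNReal.ofReal_mul hW, mul_assoc]
  exact (ENNReal.ofReal_le_ofReal_iff (by positivity)).mp key

lemma canPack_height_card {T : Finset ι} {w d h : ι → ℝ} {W D : ℝ}
    (hw : ∀ i ∈ T, w i ≤ W) (hd : ∀ i ∈ T, d i ≤ D)
    (hh : ∀ i ∈ T, h i ≤ 1) :
    CanPack T w d h W D T.card := by
  classical
  let level : ι → ℕ := fun i => if hi : i ∈ T then T.equivFin ⟨i, hi⟩ else 0
  have level_lt : ∀ i ∈ T, level i < T.card := fun i hi => by simp [level, hi]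
  have level_injOn : Set.InjOn level T := fun i hi j hj hij => by
    simp only [level, dif_pos (Finset.mem_coe.1 hi), dif_pos (Finset.mem_coe.1 hj)] at hij
    exact Subtype.ext_iff.1 (T.equivFin.injective (Fin.val_injective hij))
  refine ⟨fun _ => 0, fun _ => 0, fun i => level i, fun i hi => ?_, fun i hi j hj hij => ?_⟩
  · have : ((level i : ℕ) : ℝ) + 1 ≤ T.card := by exact_mod_cast level_lt i hi
    refine ⟨le_rfl, by simpa using hw i hi, le_rfl, by simpa using hd i hi,
      Nat.cast_nonneg _, by linarith [hh i hi]⟩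
  · have hlevel : level i ≠ level j := fun h => hij (level_injOn hi hj h)
    refine Set.disjoint_prod.2 (Or.inr (Set.disjoint_prod.2 (Or.inr ?_)))
    rw [Set.Ioo_disjoint_Ioo]
    rcases hlevel.lt_or_gt with hlt | hlt
    · have : ((level i : ℕ) : ℝ) + 1 ≤ level j := by exact_mod_cast hlt
      exact min_le_of_left_le (le_max_of_le_right (by linarith [hh i hi]))
    · have : ((level j : ℕ) : ℝ) + 1 ≤ level i := by exact_mod_cast hlt
      exact min_le_of_right_le (le_max_of_le_left (by linarith [hh j hj]))

lemma le_OPTSP {T : Finset ι} {w d h : ι → ℝ} {a H₀ : ℝ} (hH₀ : 0 ≤ H₀)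
    (h₀ : CanPack T w d h 1 1 H₀) (ha : ∀ H, 0 ≤ H → CanPack T w d h 1 1 H → a ≤ H) :
    a ≤ OPTSP T w d h :=
  le_csInf ⟨H₀, hH₀, h₀⟩ fun H hH => ha H hH.1 hH.2

lemma disjoint_rectRegion_of_mem_Ioo {w d h x y z w' d' h' x' y' z' c : ℝ}
    (hdisj : Disjoint (ItemRegion w d h x y z) (ItemRegion w' d' h' x' y' z'))
    (hc : c ∈ Set.Ioo z (z + h)) (hc' : c ∈ Set.Ioo z' (z' + h')) :
    Disjoint (RectRegion w d x y) (RectRegion w' d' x' y') := by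
  rw [Set.disjoint_left] at hdisj ⊢
  rintro ⟨a, b⟩ ⟨ha, hb⟩ ⟨ha', hb'⟩
  exact hdisj (a := (a, b, c)) ⟨ha, hb, hc⟩ ⟨ha', hb', hc'⟩

lemma OPT2DBP_le_card {β : Type*} [DecidableEq β] {T : Finset ι} {w h : ι → ℝ}
    (B : Finset β) (hB : B.Nonempty) (bin : ι → β) (hbin : ∀ i ∈ T, bin i ∈ B)
    (hpack : ∀ b, CanPack2 {i ∈ T | bin i = b} w h 1 1) :
    OPT2DBP T w h ≤ B.card := by
  obtain ⟨b₀, hb₀⟩ := hB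
  let e := B.equivFin
  let f : ι → Fin B.card := fun i =>
    if hi : bin i ∈ B then e ⟨bin i, hi⟩ else e ⟨b₀, hb₀⟩
  refine Nat.sInf_le ⟨f, fun b => ?_⟩
  have hfiber : {i ∈ T | f i = b} = {i ∈ T | bin i = e.symm b} := by
    refine Finset.filter_congr fun i hi => ?_
    simp only [f, dif_pos (hbin i hi), ← Equiv.eq_symm_apply, Subtype.ext_iff]
  rw [hfiber]
  exact hpack _

lemma natFloor_div_add_mul_mem_Ioo {z h u : ℝ} {j : ℕ} (hz : 0 ≤ z) (hu : 0 < u)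
    (hj : j + 1 < ⌈h / u⌉₊) :
    ((⌊z / u⌋₊ + j + 1 : ℕ) : ℝ) * u ∈ Set.Ioo z (z + h) := by
  have hfloor_le : (⌊z / u⌋₊ : ℝ) * u ≤ z :=
    (le_div_iff₀ hu).1 (Nat.floor_le (div_nonneg hz hu.le))
  have hlt_floor : z < ((⌊z / u⌋₊ : ℝ) + 1) * u :=
    (div_lt_iff₀ hu).1 (Nat.lt_floor_add_one _)
  have hj' : ((j : ℝ) + 1) * u < h := by
    have := Nat.lt_ceil.1 hj
    push_cast at this
    exact (lt_div_iff₀ hu).1 this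
  have hju : 0 ≤ (j : ℝ) * u := by positivity
  push_cast
  constructor <;> linarith

/-- `.inl t` is the bin of the plane at height `(t + 1) u`, `.inr i` the private bin of the last
copy of item `i`. -/
noncomputable def sliceBin (k : ι → ℕ) (z : ι → ℝ) (u : ℝ) (p : Σ _ : ι, ℕ) :
    ℕ ⊕ ι :=
  if p.2 + 1 < k p.1 then .inl (⌊z p.1 / u⌋₊ + p.2) else .inr p.1

lemma sliceBin_eq_inl {k : ι → ℕ} {z : ι → ℝ} {u : ℝ} {i : ι} {j t : ℕ} :
    sliceBin k z u ⟨i, j⟩ = .inl t ↔ j + 1 < k i ∧ ⌊z i / u⌋₊ + j = t := by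
  by_cases hj : j + 1 < k i <;> simp [sliceBin, hj]

lemma sliceBin_eq_inr {k : ι → ℕ} {z : ι → ℝ} {u : ℝ} {i i' : ι} {j : ℕ} :
    sliceBin k z u ⟨i, j⟩ = .inr i' ↔ k i ≤ j + 1 ∧ i = i' := by
  by_cases hj : j + 1 < k i
  · simp [sliceBin, hj]
  · simp [sliceBin, hj, not_lt.1 hj]

lemma IsPacking.cut_mem_Ioo {J : Finset ι} {w d h x y z : ι → ℝ} {W D H : ℝ}
    {k : ι → ℕ} {u : ℝ} (hp : IsPacking J w d h W D H x y z) (hu : 0 < u)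
    (hk : ∀ i ∈ J, k i ≤ ⌈h i / u⌉₊) {i : ι} (hi : i ∈ J) {j : ℕ}
    (hj : j + 1 < k i) :
    ((⌊z i / u⌋₊ + j + 1 : ℕ) : ℝ) * u ∈ Set.Ioo (z i) (z i + h i) :=
  natFloor_div_add_mul_mem_Ioo (hp.1 i hi).2.2.2.2.1 hu (hj.trans_le (hk i hi))

lemma IsPacking.canPack2_sliceBin_fiber [DecidableEq ι] {J : Finset ι} {w d h x y z : ι → ℝ}
    {W D H : ℝ} {k : ι → ℕ} {u : ℝ} (hp : IsPacking J w d h W D H x y z) (hu : 0 < u)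
    (hk : ∀ i ∈ J, k i ≤ ⌈h i / u⌉₊) (b : ℕ ⊕ ι) :
    CanPack2 {p ∈ J.sigma fun i => Finset.range (k i) | sliceBin k z u p = b}
      (fun p => w p.1) (fun p => d p.1) W D := by
  refine ⟨fun p => x p.1, fun p => y p.1, fun p hp' => ?_, fun p hp' q hq' hpq => ?_⟩
  · obtain ⟨hx0, hx1, hy0, hy1, -⟩ :=
      hp.1 p.1 (Finset.mem_sigma.1 (Finset.mem_filter.1 hp').1).1
    exact ⟨hx0, hx1, hy0, hy1⟩
  rcases p with ⟨i, j⟩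
  rcases q with ⟨i', j'⟩
  obtain ⟨hpR, hpb⟩ := Finset.mem_filter.1 hp'
  obtain ⟨hqR, hqb⟩ := Finset.mem_filter.1 hq'
  simp only [Finset.mem_sigma, Finset.mem_range] at hpR hqR
  obtain ⟨hi, hj⟩ := hpR
  obtain ⟨hi', hj'⟩ := hqR
  rcases b with t | l
  · obtain ⟨hjk, rfl⟩ := sliceBin_eq_inl.1 hpb
    obtain ⟨hjk', hsame⟩ := sliceBin_eq_inl.1 hqb
    by_cases hii : i = i'
    · subst hii
      exact absurd (by rw [show j = j' by omega]) hpq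
    · have hc' := hp.cut_mem_Ioo hu hk hi' hjk'
      rw [hsame] at hc'
      exact disjoint_rectRegion_of_mem_Ioo (hp.2 i hi i' hi' hii)
        (hp.cut_mem_Ioo hu hk hi hjk) hc'
  · obtain ⟨hjk, rfl⟩ := sliceBin_eq_inr.1 hpb
    obtain ⟨hjk', rfl⟩ := sliceBin_eq_inr.1 hqb
    exact absurd (by rw [show j = j' by omega]) hpq

theorem OPT2DBP_sigma_range_le {J : Finset ι} {w d h : ι → ℝ} {k : ι → ℕ} {u H : ℝ}
    (hu : 0 < u) (hJ : J.Nonempty) (hk : ∀ i ∈ J, k i ≤ ⌈h i / u⌉₊)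
    (hpack : CanPack J w d h 1 1 H) :
    OPT2DBP (J.sigma fun i => Finset.range (k i)) (fun p => w p.1) (fun p => d p.1) ≤
      ⌊H / u⌋₊ + J.card := by
  classical
  obtain ⟨x, y, z, hp⟩ := hpack
  have hmaps : ∀ p ∈ J.sigma fun i => Finset.range (k i),
      sliceBin k z u p ∈ (Finset.range ⌊H / u⌋₊).disjSum J := by
    rintro ⟨i, j⟩ hij
    obtain ⟨hi, -⟩ := Finset.mem_sigma.1 hij
    unfold sliceBin
    split_ifs with hj
    · have hcut_le : ((⌊z i / u⌋₊ + j + 1 : ℕ) : ℝ) ≤ H / u :=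
        (le_div_iff₀ hu).2 ((hp.cut_mem_Ioo hu hk hi hj).2.le.trans (hp.1 i hi).2.2.2.2.2)
      exact Finset.inl_mem_disjSum.2 (Finset.mem_range.2 (Nat.le_floor hcut_le))
    · exact Finset.inr_mem_disjSum.2 hi
  calc OPT2DBP (J.sigma fun i => Finset.range (k i)) (fun p => w p.1) (fun p => d p.1)
      ≤ ((Finset.range ⌊H / u⌋₊).disjSum J).card :=
        OPT2DBP_le_card _ ⟨.inr hJ.choose, Finset.inr_mem_disjSum.2 hJ.choose_spec⟩
          (sliceBin k z u) hmaps (hp.canPack2_sliceBin_fiber hu hk)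
    _ = ⌊H / u⌋₊ + J.card := by rw [Finset.card_disjSum, Finset.card_range]

end

theorem stmt11_general {ι : Type*} (J : Finset ι) (w d h : ι → ℝ)
    (hdims : ∀ i ∈ J, 0 < w i ∧ w i ≤ 1 ∧ 0 < d i ∧ d i ≤ 1 ∧
      0 < h i ∧ h i ≤ 1)
    (ε V u : ℝ) (hε : 0 < ε)
    (hV : V = ∑ i ∈ J, w i * d i * h i) (hVpos : 0 < V)
    (hu : u = ε * V / (J.card : ℝ))
    (kf : ι → ℕ) (hkf : ∀ i ∈ J, kf i = ⌈h i / u⌉₊) :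
    u * (OPT2DBP (J.sigma fun i => Finset.range (kf i))
          (fun p => w p.1) (fun p => d p.1) : ℝ) ≤
      (1 + ε) * OPTSP J w d h := by
  have hJ : J.Nonempty := Finset.nonempty_of_sum_ne_zero (hV ▸ hVpos.ne')
  have hcard : (0 : ℝ) < J.card := by exact_mod_cast hJ.card_pos
  have hu0 : 0 < u := by rw [hu]; positivity
  have hun : u * J.card = ε * V := by rw [hu, div_mul_cancel₀ _ hcard.ne']
  rw [← div_le_iff₀' (by linarith)]
  refine le_OPTSP (Nat.cast_nonneg _) (canPack_height_card (fun i hi => (hdims i hi).2.1)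
    (fun i hi => (hdims i hi).2.2.2.1) (fun i hi => (hdims i hi).2.2.2.2.2))
    fun H hH hpack => (div_le_iff₀' (by linarith)).2 ?_
  have hVH : V ≤ H := by
    obtain ⟨x, y, z, hp⟩ := hpack
    simpa [hV] using hp.sum_volume_le (fun i hi => ⟨(hdims i hi).1.le, (hdims i hi).2.2.1.le,
      (hdims i hi).2.2.2.2.1.le⟩) zero_le_one zero_le_one hH
  have hbins := OPT2DBP_sigma_range_le hu0 hJ (fun i hi => (hkf i hi).le) hpack
  have hfloor : u * ⌊H / u⌋₊ ≤ H := by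
    rw [mul_comm]
    exact (le_div_iff₀ hu0).1 (Nat.floor_le (div_nonneg hH hu0.le))
  calc u * (OPT2DBP (J.sigma fun i => Finset.range (kf i)) (fun p => w p.1) (fun p => d p.1) : ℝ)
      ≤ u * (⌊H / u⌋₊ + J.card) := by gcongr; exact_mod_cast hbins
    _ = u * ⌊H / u⌋₊ + ε * V := by rw [mul_add, hun]
    _ ≤ H + ε * H := by gcongr
    _ = (1 + ε) * H := by ring

/-- With `u = ε·V/n`, `k_i = ⌈h_i/u⌉`, and `R(J)` the
multiset of rectangles consisting of `k_i` copies of the `w_i × d_i` base of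
each item `i ∈ J`, we have `u · OPT_2DBP(R(J)) ≤ (1+ε) · OPT_SP(J)`. -/
theorem stmt11 {ι : Type*} (J : Finset ι) (w d h : ι → ℝ)
    (hn : J.Nonempty)
    (hdims : ∀ i ∈ J, 0 < w i ∧ w i ≤ 1 ∧ 0 < d i ∧ d i ≤ 1 ∧
      0 < h i ∧ h i ≤ 1)
    (ε V u : ℝ) (hε : 0 < ε)
    (hV : V = ∑ i ∈ J, w i * d i * h i) (hVpos : 0 < V)
    (hu : u = ε * V / (J.card : ℝ))
    (kf : ι → ℕ) (hkf : ∀ i ∈ J, kf i = ⌈h i / u⌉₊) :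
    u * (OPT2DBP (J.sigma fun i => Finset.range (kf i))
          (fun p => w p.1) (fun p => d p.1) : ℝ) ≤
      (1 + ε) * OPTSP J w d h :=
  stmt11_general J w d h hdims ε V u hε hV hVpos hu kf hkf
end

section
/- Let I be a finite set of 3D items with all dimensions in (0,1] and total volume v(I) ≤ 1, and let ε ∈ (0,1]. Define μ_0 = ε and μ_j = μ_{j−1}^6 for j ≥ 1, and let N = ⌈3/ε⌉. Then there exists an index j ∈ {1,…,N} such that the total volume of the items of I that have at least one of their three dimensions in the interval (μ_j, μ_{j−1}] is at most ε. -/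
open scoped Classical

/-!
The intervals `(μⱼ, μⱼ₋₁]` are pairwise disjoint because `μ` is antitone, so each of the
three dimensions of an item lies in at most one of them. Summing the filtered volumes over
`j ∈ {1,…,N}` therefore counts every item at most three times, giving a total of at most
`3 v(I) ≤ 3 ≤ N ε`; hence some summand is at most `ε`.
-/

open Finset

theorem Finset.sum_sum_filter_le_nsmul {κ ι M : Type*} [AddCommMonoid M] [PartialOrder M]
    [IsOrderedAddMonoid M] (J : Finset κ) (I : Finset ι) (P : κ → ι → Prop) [DecidableRel P]
    {v : ι → M} {k : ℕ} (hv : ∀ i ∈ I, 0 ≤ v i) (hP : ∀ i ∈ I, #{j ∈ J | P j i} ≤ k) :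
    ∑ j ∈ J, ∑ i ∈ I with P j i, v i ≤ k • ∑ i ∈ I, v i := by
  have hswap : ∑ j ∈ J, ∑ i ∈ I with P j i, v i = ∑ i ∈ I, #{j ∈ J | P j i} • v i := by
    simp_rw [sum_filter]
    rw [sum_comm]
    simp_rw [← sum_filter, sum_const]
  rw [hswap, smul_sum]
  exact sum_le_sum fun i hi => nsmul_le_nsmul_left (hv i hi) (hP i hi)

theorem Antitone.card_filter_mem_Ioc_pred_le_one {α : Type*} [Preorder α] {μ : ℕ → α}
    (hμ : Antitone μ) (s : Finset ℕ) (x : α) :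
    #{j ∈ s | μ j < x ∧ x ≤ μ (j - 1)} ≤ 1 := by
  refine card_le_one.mpr fun a ha b hb => ?_
  simp only [mem_filter] at ha hb
  by_contra hab
  rcases Nat.lt_or_gt_of_ne hab with hab | hab
  · exact (hb.2.2.trans (hμ (by omega : a ≤ b - 1))).not_gt ha.2.1
  · exact (ha.2.2.trans (hμ (by omega : b ≤ a - 1))).not_gt hb.2.1

theorem antitone_of_apply_succ_eq_pow {R : Type*} [Semiring R] [PartialOrder R] [IsOrderedRing R]
    {μ : ℕ → R} {n : ℕ} (hn : n ≠ 0) (h0 : 0 ≤ μ 0) (h1 : μ 0 ≤ 1)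
    (hμ : ∀ j, μ (j + 1) = μ j ^ n) : Antitone μ := by
  have hbound : ∀ j, 0 ≤ μ j ∧ μ j ≤ 1 := by
    intro j
    induction j with
    | zero => exact ⟨h0, h1⟩
    | succ j ih => rw [hμ j]; exact ⟨pow_nonneg ih.1 n, pow_le_one₀ ih.1 ih.2⟩
  refine antitone_nat_of_succ_le fun j => ?_
  rw [hμ j]
  exact pow_le_of_le_one (hbound j).1 (hbound j).2 hn

/-- Shifting argument: if the items of `I` have all
dimensions in `(0,1]` and total volume at most `1`, `ε ∈ (0,1]`, `μ₀ = ε`,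
`μⱼ = μ_{j-1}⁶`, and `N = ⌈3/ε⌉`, then for some `j ∈ {1,…,N}` the total
volume of the items with at least one dimension in `(μⱼ, μ_{j-1}]` is at most
`ε`. -/
theorem stmt15 {ι : Type*} (I : Finset ι) (w d h : ι → ℝ) (ε : ℝ)
    (hεpos : 0 < ε) (hεle : ε ≤ 1)
    (hdims : ∀ i ∈ I, 0 < w i ∧ w i ≤ 1 ∧ 0 < d i ∧ d i ≤ 1 ∧
      0 < h i ∧ h i ≤ 1)
    (hvol : ∑ i ∈ I, w i * d i * h i ≤ 1)
    (μ : ℕ → ℝ) (hμ0 : μ 0 = ε) (hμ : ∀ j, μ (j + 1) = (μ j) ^ 6) :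
    ∃ j ∈ Finset.Icc 1 ⌈3 / ε⌉₊,
      ∑ i ∈ I.filter (fun i =>
          (μ j < w i ∧ w i ≤ μ (j - 1)) ∨ (μ j < d i ∧ d i ≤ μ (j - 1)) ∨
          (μ j < h i ∧ h i ≤ μ (j - 1))),
        w i * d i * h i ≤ ε := by
  set J := Icc 1 ⌈3 / ε⌉₊
  have hanti : Antitone μ :=
    antitone_of_apply_succ_eq_pow (by norm_num) (hμ0 ▸ hεpos.le) (hμ0 ▸ hεle) hμ
  have hcount : ∀ i ∈ I, #{j ∈ J | (μ j < w i ∧ w i ≤ μ (j - 1)) ∨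
      (μ j < d i ∧ d i ≤ μ (j - 1)) ∨ (μ j < h i ∧ h i ≤ μ (j - 1))} ≤ 3 := fun i _ => by
    have hone := hanti.card_filter_mem_Ioc_pred_le_one J
    rw [filter_or, filter_or]
    grw [card_union_le, card_union_le, hone, hone, hone]
  have hvol_nonneg : ∀ i ∈ I, 0 ≤ w i * d i * h i := fun i hi => by
    obtain ⟨hw, -, hd, -, hh, -⟩ := hdims i hi
    positivity
  have hJ : (3 : ℝ) ≤ #J • ε := by
    rw [Nat.card_Icc, Nat.add_sub_cancel, nsmul_eq_mul]
    exact (div_le_iff₀ hεpos).mp (Nat.le_ceil _)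
  refine exists_le_of_sum_le (nonempty_Icc.mpr (Nat.one_le_ceil_iff.mpr (by positivity))) ?_
  calc _ ≤ 3 • ∑ i ∈ I, w i * d i * h i := sum_sum_filter_le_nsmul J I _ hvol_nonneg hcount
    _ ≤ 3 := by rw [nsmul_eq_mul]; push_cast; linarith
    _ ≤ ∑ _ ∈ J, ε := by rwa [sum_const]
end
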